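/- arXiv:2507.20089 — 6 statements merged into one kernel-verified Lean document; each statement's English description precedes it below -/
import Mathlib

section
/- Let n, p_I, p_J be positive integers, let V_I ∈ ℝ^{n×p_I} and V_J ∈ ℝ^{n×p_J} be real matrices such that the Gram matrices V_II := V_I⊤V_I and V_JJ := V_J⊤V_J are positive definite, and let ρ ≥ 0. Then the symmetric block matrix G(ρ) := [[(1+ρ)V_II, −ρ·V_IJ],[−ρ·V_JI, (1+ρ)V_JJ]] of size (p_I+p_J)×(p_I+p_J) is positive definite; in particular it is invertible. -/
/-! With `W = [V_I, -V_J]`, `G(ρ) = diag(V_II, V_JJ) + ρ • WᵀW`: a positive definite block-diagonal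
matrix plus a positive semidefinite one. -/

open Matrix
open scoped ComplexOrder

theorem Matrix.PosDef.fromBlocks_zero {𝕜 m n : Type*} [RCLike 𝕜] [Fintype m] [Fintype n]
    {A : Matrix m m 𝕜} {D : Matrix n n 𝕜} (hA : A.PosDef) (hD : D.PosDef) :
    (fromBlocks A 0 0 D).PosDef := by
  refine posDef_iff_dotProduct_mulVec.mpr
    ⟨hA.isHermitian.fromBlocks (by simp) hD.isHermitian, fun x hx => ?_⟩
  obtain ⟨u, v, rfl⟩ : ∃ u v, x = Sum.elim u v := ⟨_, _, (Sum.elim_comp_inl_inr x).symm⟩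
  rw [Function.star_sumElim, fromBlocks_mulVec, sumElim_dotProduct_sumElim]
  simp only [zero_mulVec, add_zero, zero_add]
  rcases eq_or_ne u 0 with rfl | hu
  · have hv : v ≠ 0 := by rintro rfl; exact hx Sum.elim_zero_zero
    simpa using hD.dotProduct_mulVec_pos hv
  · exact add_pos_of_pos_of_nonneg (hA.dotProduct_mulVec_pos hu)
      (hD.posSemidef.dotProduct_mulVec_nonneg v)

theorem Matrix.fromBlocks_gram_eq_add {R l m n : Type*} [CommRing R] [Fintype l]
    (A : Matrix l m R) (B : Matrix l n R) (ρ : R) :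
    fromBlocks ((1 + ρ) • (Aᵀ * A)) ((-ρ) • (Aᵀ * B)) ((-ρ) • (Bᵀ * A)) ((1 + ρ) • (Bᵀ * B)) =
      fromBlocks (Aᵀ * A) 0 0 (Bᵀ * B) + ρ • ((fromCols A (-B))ᵀ * fromCols A (-B)) := by
  rw [transpose_fromCols, fromRows_mul_fromCols, fromBlocks_smul, fromBlocks_add]
  simp only [transpose_neg, Matrix.mul_neg, Matrix.neg_mul, neg_neg, add_smul, one_smul,
    zero_add, smul_neg, neg_smul]

theorem blockMatrix_posDef_of_posDef_gram_general
    (n pI pJ : ℕ)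
    (VI : Matrix (Fin n) (Fin pI) ℝ) (VJ : Matrix (Fin n) (Fin pJ) ℝ)
    (hI : (VIᵀ * VI).PosDef) (hJ : (VJᵀ * VJ).PosDef)
    (ρ : ℝ) (hρ : 0 ≤ ρ) :
    (Matrix.fromBlocks ((1 + ρ) • (VIᵀ * VI)) ((-ρ) • (VIᵀ * VJ))
        ((-ρ) • (VJᵀ * VI)) ((1 + ρ) • (VJᵀ * VJ))).PosDef ∧
    IsUnit (Matrix.fromBlocks ((1 + ρ) • (VIᵀ * VI)) ((-ρ) • (VIᵀ * VJ))
        ((-ρ) • (VJᵀ * VI)) ((1 + ρ) • (VJᵀ * VJ))).det := by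
  have hPD : (Matrix.fromBlocks ((1 + ρ) • (VIᵀ * VI)) ((-ρ) • (VIᵀ * VJ))
      ((-ρ) • (VJᵀ * VI)) ((1 + ρ) • (VJᵀ * VJ))).PosDef := by
    rw [fromBlocks_gram_eq_add]
    have hW := posSemidef_conjTranspose_mul_self (fromCols VI (-VJ))
    rw [conjTranspose_eq_transpose_of_trivial] at hW
    exact (hI.fromBlocks_zero hJ).add_posSemidef (hW.smul hρ)
  exact ⟨hPD, (isUnit_iff_isUnit_det _).mp hPD.isUnit⟩

/-- For `V_I ∈ ℝ^{n×p_I}`, `V_J ∈ ℝ^{n×p_J}` with positive definite Gram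
matrices `V_II = V_Iᵀ V_I` and `V_JJ = V_Jᵀ V_J`, and `ρ ≥ 0`, the block matrix
`G(ρ) = [[(1+ρ)V_II, −ρ V_IJ], [−ρ V_JI, (1+ρ)V_JJ]]` is positive definite, and in
particular invertible. -/
theorem blockMatrix_posDef_of_posDef_gram
    (n pI pJ : ℕ) (hn : 0 < n) (hpI : 0 < pI) (hpJ : 0 < pJ)
    (VI : Matrix (Fin n) (Fin pI) ℝ) (VJ : Matrix (Fin n) (Fin pJ) ℝ)
    (hI : (VIᵀ * VI).PosDef) (hJ : (VJᵀ * VJ).PosDef)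
    (ρ : ℝ) (hρ : 0 ≤ ρ) :
    (Matrix.fromBlocks ((1 + ρ) • (VIᵀ * VI)) ((-ρ) • (VIᵀ * VJ))
        ((-ρ) • (VJᵀ * VI)) ((1 + ρ) • (VJᵀ * VJ))).PosDef ∧
    IsUnit (Matrix.fromBlocks ((1 + ρ) • (VIᵀ * VI)) ((-ρ) • (VIᵀ * VJ))
        ((-ρ) • (VJᵀ * VI)) ((1 + ρ) • (VJᵀ * VJ))).det :=
  blockMatrix_posDef_of_posDef_gram_general n pI pJ VI VJ hI hJ ρ hρ
end

section
/- Let V_I ∈ ℝ^{n×p_I}, V_J ∈ ℝ^{n×p_J} with V_II and V_JJ positive definite, and let Y ∈ ℝⁿ. Then θ̂_I(0) = V_II⁻¹V_I⊤Y, and the map ρ ↦ θ̂_I(ρ) (defined for ρ in a neighborhood of 0 on which G(ρ) is invertible) is differentiable at ρ = 0 with derivative V_II⁻¹V_IJV_JJ⁻¹V_J⊤Y − V_II⁻¹V_I⊤Y. Consequently θ̂_I(ρ) = (1−ρ)·V_II⁻¹V_I⊤Y + ρ·V_II⁻¹V_IJV_JJ⁻¹V_J⊤Y + o(ρ) as ρ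 → 0. -/
open Matrix Asymptotics Filter Topology

/-- The block matrix `G(ρ) = [[(1+ρ)V_II, −ρ V_IJ], [−ρ V_JI, (1+ρ)V_JJ]]`. -/
def mlG {n pI pJ : ℕ} (VI : Matrix (Fin n) (Fin pI) ℝ)
    (VJ : Matrix (Fin n) (Fin pJ) ℝ) (ρ : ℝ) :
    Matrix (Fin pI ⊕ Fin pJ) (Fin pI ⊕ Fin pJ) ℝ :=
  Matrix.fromBlocks ((1 + ρ) • (VIᵀ * VI)) ((-ρ) • (VIᵀ * VJ))
    ((-ρ) • (VJᵀ * VI)) ((1 + ρ) • (VJᵀ * VJ))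

/-- The mutual-learning estimator `θ̂_I(ρ)`: the first block of
`G(ρ)⁻¹ (V_Iᵀ Y; V_Jᵀ Y)`. -/
noncomputable def mlThetaHatI {n pI pJ : ℕ} (VI : Matrix (Fin n) (Fin pI) ℝ)
    (VJ : Matrix (Fin n) (Fin pJ) ℝ) (Y : Fin n → ℝ) (ρ : ℝ) : Fin pI → ℝ :=
  fun i => ((mlG VI VJ ρ)⁻¹ *ᵥ Sum.elim (VIᵀ *ᵥ Y) (VJᵀ *ᵥ Y)) (Sum.inl i)

/-!
`G(ρ) = G(0) + ρ D` is affine in `ρ`, with `G(0) = diag(V_II, V_JJ)` invertible and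
`D = [[V_II, −V_IJ], [−V_JI, V_JJ]]`. Hence `ρ ↦ G(ρ)⁻¹` is differentiable at `0` with derivative
`−G(0)⁻¹ D G(0)⁻¹ = −[[V_II⁻¹, −V_II⁻¹V_IJV_JJ⁻¹], [−V_JJ⁻¹V_JIV_II⁻¹, V_JJ⁻¹]]`, and the first block
of this applied to `(V_Iᵀ Y; V_Jᵀ Y)` is the claimed derivative. The expansion is the definition
of the derivative at `0`.
-/

section Calculus

variable {𝕜 l m : Type*} [RCLike 𝕜] [Fintype m]

-- Only the proof needs a normed-algebra structure on matrices (for `hasFDerivAt_ringInverse`);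
-- the statement lives in the product topology, which every such norm induces.
attribute [local instance] Matrix.linftyOpNormedRing Matrix.linftyOpNormedAlgebra in
theorem Matrix.hasDerivAt_inv_add_smul [DecidableEq m] {M : Matrix m m 𝕜} (hM : IsUnit M)
    (D : Matrix m m 𝕜) :
    HasDerivAt (fun t : 𝕜 => (M + t • D)⁻¹) (-(M⁻¹ * D * M⁻¹)) 0 := by
  obtain ⟨u, rfl⟩ := hM
  have hline := ((hasDerivAt_id' (0 : 𝕜)).smul_const D).const_add (u : Matrix m m 𝕜)
  have hinv := (hasFDerivAt_ringInverse (𝕜 := 𝕜) u).comp_hasDerivAt_of_eq 0 hline (by simp)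
  refine (hinv.congr_deriv ?_).congr_of_eventuallyEq (.of_forall fun t => ?_)
  · simp [coe_units_inv, mul_assoc]
  · exact nonsing_inv_eq_ringInverse _

theorem HasDerivAt.mulVec_const {F : 𝕜 → Matrix l m 𝕜} {F' : Matrix l m 𝕜} {t : 𝕜}
    (hF : HasDerivAt F F' t) (b : m → 𝕜) :
    HasDerivAt (fun s => F s *ᵥ b) (F' *ᵥ b) t := by
  refine hasDerivAt_pi.2 fun i => ?_
  simp only [mulVec, dotProduct]
  exact HasDerivAt.fun_sum fun j _ => (hasDerivAt_pi.1 (hasDerivAt_pi.1 hF i) j).mul_const (b j)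

end Calculus

section MutualLearning

variable {n pI pJ : ℕ} (VI : Matrix (Fin n) (Fin pI) ℝ) (VJ : Matrix (Fin n) (Fin pJ) ℝ)

def mlGDeriv : Matrix (Fin pI ⊕ Fin pJ) (Fin pI ⊕ Fin pJ) ℝ :=
  fromBlocks (VIᵀ * VI) (-(VIᵀ * VJ)) (-(VJᵀ * VI)) (VJᵀ * VJ)

theorem mlG_eq_mlG_zero_add_smul (ρ : ℝ) :
    mlG VI VJ ρ = mlG VI VJ 0 + ρ • mlGDeriv VI VJ := by
  simp [mlG, mlGDeriv, fromBlocks_smul, fromBlocks_add, add_smul]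

theorem mlG_zero : mlG VI VJ 0 = fromBlocks (VIᵀ * VI) 0 0 (VJᵀ * VJ) := by
  simp [mlG]

variable {VI VJ}

theorem inv_mlG_zero (hI : IsUnit (VIᵀ * VI)) (hJ : IsUnit (VJᵀ * VJ)) :
    (mlG VI VJ 0)⁻¹ = fromBlocks (VIᵀ * VI)⁻¹ 0 0 (VJᵀ * VJ)⁻¹ := by
  simpa [mlG_zero] using
    inv_fromBlocks_zero₂₁_of_isUnit_iff (VIᵀ * VI) 0 (VJᵀ * VJ) (iff_of_true hI hJ)

theorem mlThetaHatI_zero (hI : IsUnit (VIᵀ * VI)) (hJ : IsUnit (VJᵀ * VJ)) (Y : Fin n → ℝ) :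
    mlThetaHatI VI VJ Y 0 = (VIᵀ * VI)⁻¹ *ᵥ (VIᵀ *ᵥ Y) := by
  funext i
  simp [mlThetaHatI, inv_mlG_zero hI hJ, fromBlocks_mulVec]

theorem inv_mlG_zero_mul_mlGDeriv_mul_inv_mlG_zero (hI : IsUnit (VIᵀ * VI))
    (hJ : IsUnit (VJᵀ * VJ)) :
    (mlG VI VJ 0)⁻¹ * mlGDeriv VI VJ * (mlG VI VJ 0)⁻¹ =
      fromBlocks (VIᵀ * VI)⁻¹ (-((VIᵀ * VI)⁻¹ * (VIᵀ * VJ) * (VJᵀ * VJ)⁻¹))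
        (-((VJᵀ * VJ)⁻¹ * (VJᵀ * VI) * (VIᵀ * VI)⁻¹)) (VJᵀ * VJ)⁻¹ := by
  simp [mlGDeriv, inv_mlG_zero hI hJ, fromBlocks_multiply, Matrix.mul_assoc,
    mul_nonsing_inv _ ((isUnit_iff_isUnit_det _).1 hI),
    mul_nonsing_inv _ ((isUnit_iff_isUnit_det _).1 hJ)]

theorem hasDerivAt_mlThetaHatI_zero (hI : IsUnit (VIᵀ * VI)) (hJ : IsUnit (VJᵀ * VJ))
    (Y : Fin n → ℝ) :
    HasDerivAt (mlThetaHatI VI VJ Y)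
      ((VIᵀ * VI)⁻¹ *ᵥ ((VIᵀ * VJ) *ᵥ ((VJᵀ * VJ)⁻¹ *ᵥ (VJᵀ *ᵥ Y)))
        - (VIᵀ * VI)⁻¹ *ᵥ (VIᵀ *ᵥ Y)) 0 := by
  have hG0 : IsUnit (mlG VI VJ 0) := by
    rw [mlG_zero, isUnit_fromBlocks_zero₂₁]
    exact ⟨hI, hJ⟩
  have h := (hasDerivAt_inv_add_smul hG0 (mlGDeriv VI VJ)).mulVec_const
    (Sum.elim (VIᵀ *ᵥ Y) (VJᵀ *ᵥ Y))
  simp only [← mlG_eq_mlG_zero_add_smul, inv_mlG_zero_mul_mlGDeriv_mul_inv_mlG_zero hI hJ] at h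
  refine hasDerivAt_pi.2 fun i => (hasDerivAt_pi.1 h (Sum.inl i)).congr_deriv ?_
  simp [fromBlocks_neg, fromBlocks_mulVec, neg_mulVec, Matrix.mul_assoc]
  ring

end MutualLearning

/-- With `V_II` and `V_JJ` positive definite:
`θ̂_I(0) = V_II⁻¹ V_Iᵀ Y`; `ρ ↦ θ̂_I(ρ)` is differentiable at `0` with derivative
`V_II⁻¹ V_IJ V_JJ⁻¹ V_Jᵀ Y − V_II⁻¹ V_Iᵀ Y`; consequently
`θ̂_I(ρ) = (1−ρ) V_II⁻¹ V_Iᵀ Y + ρ V_II⁻¹ V_IJ V_JJ⁻¹ V_Jᵀ Y + o(ρ)` as `ρ → 0`. -/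
theorem mlThetaHatI_deriv_at_zero
    (n pI pJ : ℕ) (VI : Matrix (Fin n) (Fin pI) ℝ) (VJ : Matrix (Fin n) (Fin pJ) ℝ)
    (hI : (VIᵀ * VI).PosDef) (hJ : (VJᵀ * VJ).PosDef) (Y : Fin n → ℝ) :
    mlThetaHatI VI VJ Y 0 = (VIᵀ * VI)⁻¹ *ᵥ (VIᵀ *ᵥ Y) ∧
    HasDerivAt (fun ρ => mlThetaHatI VI VJ Y ρ)
      ((VIᵀ * VI)⁻¹ *ᵥ ((VIᵀ * VJ) *ᵥ ((VJᵀ * VJ)⁻¹ *ᵥ (VJᵀ *ᵥ Y)))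
        - (VIᵀ * VI)⁻¹ *ᵥ (VIᵀ *ᵥ Y)) 0 ∧
    (fun ρ => mlThetaHatI VI VJ Y ρ
        - ((1 - ρ) • ((VIᵀ * VI)⁻¹ *ᵥ (VIᵀ *ᵥ Y))
          + ρ • ((VIᵀ * VI)⁻¹ *ᵥ ((VIᵀ * VJ) *ᵥ ((VJᵀ * VJ)⁻¹ *ᵥ (VJᵀ *ᵥ Y))))))
      =o[𝓝 (0 : ℝ)] (fun ρ => ρ) := by
  have h0 := mlThetaHatI_zero hI.isUnit hJ.isUnit Y
  have hderiv := hasDerivAt_mlThetaHatI_zero hI.isUnit hJ.isUnit Y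
  refine ⟨h0, hderiv, ?_⟩
  refine (hasDerivAt_iff_isLittleO.1 hderiv).congr' (.of_forall fun ρ => ?_)
    (.of_forall fun ρ => sub_zero ρ)
  rw [h0]
  module
end

section
/- With the oracle quantities defined from θ ∈ ℝ^p, T_I ∈ ℝ^{p×p_I}, T_J ∈ ℝ^{p×p_J}, σ_I > 0, σ_J > 0 via the block inverse of K = [[Σ̃_I, T_IJ],[T_JI, Σ̃_J]], the following identity holds: Σ̃_I⁻¹T_IJθ̄*_J + θ̄*_I = θ*_I; equivalently, Σ̃_I⁻¹T_IJθ̄*_J − (θ*_I − θ̄*_I) = 0. -/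
/-!
Stack `T = [T_I T_J]`, so that `K = TᵀT + diag(σ_I², σ_J²)` and `θ̄* = (K⁻¹)ᵀ Tᵀ θ`. Then
`Kᵀ θ̄* = Tᵀ θ`, whose first block row reads `Σ̃_I θ̄*_I + T_IJ θ̄*_J = T_Iᵀ θ`; multiplying by
`Σ̃_I⁻¹` gives the identity. Invertibility of `K` and `Σ̃_I` comes from their being a Gram matrix
plus a positive diagonal.
-/

open Matrix

namespace MetaFusionStmt8

variable {p pI pJ : ℕ}

/-- The oracle covariance block matrix `K = [[Σ̃_I, T_IJ], [T_JI, Σ̃_J]]` with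
`Σ̃_I = T_Iᵀ T_I + σ_I² I` and `Σ̃_J = T_Jᵀ T_J + σ_J² I`. -/
noncomputable def oracleK (TI : Matrix (Fin p) (Fin pI) ℝ) (TJ : Matrix (Fin p) (Fin pJ) ℝ)
    (σI σJ : ℝ) : Matrix (Fin pI ⊕ Fin pJ) (Fin pI ⊕ Fin pJ) ℝ :=
  Matrix.fromBlocks (TIᵀ * TI + σI ^ 2 • 1) (TIᵀ * TJ) (TJᵀ * TI) (TJᵀ * TJ + σJ ^ 2 • 1)

/-- Block `A` of `K⁻¹`. -/
noncomputable def oracleA (TI : Matrix (Fin p) (Fin pI) ℝ) (TJ : Matrix (Fin p) (Fin pJ) ℝ)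
    (σI σJ : ℝ) : Matrix (Fin pI) (Fin pI) ℝ := ((oracleK TI TJ σI σJ)⁻¹).toBlocks₁₁

/-- Block `B` of `K⁻¹`. -/
noncomputable def oracleB (TI : Matrix (Fin p) (Fin pI) ℝ) (TJ : Matrix (Fin p) (Fin pJ) ℝ)
    (σI σJ : ℝ) : Matrix (Fin pI) (Fin pJ) ℝ := ((oracleK TI TJ σI σJ)⁻¹).toBlocks₁₂

/-- Block `C` of `K⁻¹`. -/
noncomputable def oracleC (TI : Matrix (Fin p) (Fin pI) ℝ) (TJ : Matrix (Fin p) (Fin pJ) ℝ)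
    (σI σJ : ℝ) : Matrix (Fin pJ) (Fin pI) ℝ := ((oracleK TI TJ σI σJ)⁻¹).toBlocks₂₁

/-- Block `D` of `K⁻¹`. -/
noncomputable def oracleD (TI : Matrix (Fin p) (Fin pI) ℝ) (TJ : Matrix (Fin p) (Fin pJ) ℝ)
    (σI σJ : ℝ) : Matrix (Fin pJ) (Fin pJ) ℝ := ((oracleK TI TJ σI σJ)⁻¹).toBlocks₂₂

/-- Oracle coefficient `θ̄*_I = (Aᵀ T_Iᵀ + Cᵀ T_Jᵀ) θ`. -/
noncomputable def thetaBarI (θ : Fin p → ℝ) (TI : Matrix (Fin p) (Fin pI) ℝ)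
    (TJ : Matrix (Fin p) (Fin pJ) ℝ) (σI σJ : ℝ) : Fin pI → ℝ :=
  ((oracleA TI TJ σI σJ)ᵀ * TIᵀ + (oracleC TI TJ σI σJ)ᵀ * TJᵀ) *ᵥ θ

/-- Oracle coefficient `θ̄*_J = (Bᵀ T_Iᵀ + Dᵀ T_Jᵀ) θ`. -/
noncomputable def thetaBarJ (θ : Fin p → ℝ) (TI : Matrix (Fin p) (Fin pI) ℝ)
    (TJ : Matrix (Fin p) (Fin pJ) ℝ) (σI σJ : ℝ) : Fin pJ → ℝ :=
  ((oracleB TI TJ σI σJ)ᵀ * TIᵀ + (oracleD TI TJ σI σJ)ᵀ * TJᵀ) *ᵥ θ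

/-- Oracle coefficient `θ*_I = Σ̃_I⁻¹ T_Iᵀ θ`. -/
noncomputable def thetaStarI (θ : Fin p → ℝ) (TI : Matrix (Fin p) (Fin pI) ℝ)
    (σI : ℝ) : Fin pI → ℝ :=
  (TIᵀ * TI + σI ^ 2 • 1)⁻¹ *ᵥ (TIᵀ *ᵥ θ)

/-- The first block row of `Kᵀ Nᵀ [X; Y] = [X; Y]` for a left inverse `N` of `K`. -/
theorem transpose_mul_add_of_fromBlocks_mul_eq_one {α m n o : Type*} [Fintype m] [Fintype n]
    [DecidableEq m] [DecidableEq n] [CommRing α]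
    {P A : Matrix m m α} {Q B : Matrix m n α} {R C : Matrix n m α} {S D : Matrix n n α}
    (h : fromBlocks A B C D * fromBlocks P Q R S = 1) (X : Matrix m o α) (Y : Matrix n o α) :
    Pᵀ * (Aᵀ * X + Cᵀ * Y) + Rᵀ * (Bᵀ * X + Dᵀ * Y) = X := by
  rw [fromBlocks_multiply, ← fromBlocks_one, fromBlocks_inj] at h
  obtain ⟨h₁₁, -, h₂₁, -⟩ := h
  calc _ = (A * P + B * R)ᵀ * X + (C * P + D * R)ᵀ * Y := by
        simp only [transpose_add, transpose_mul, Matrix.mul_add, Matrix.add_mul, Matrix.mul_assoc]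
        abel
    _ = X := by rw [h₁₁, h₂₁]; simp

theorem posDef_transpose_mul_self_add_diagonal {m n : Type*} [Fintype m] [Fintype n]
    [DecidableEq n] (T : Matrix m n ℝ) {d : n → ℝ} (hd : ∀ i, 0 < d i) :
    (Tᵀ * T + diagonal d).PosDef := by
  have hTT : (Tᵀ * T).PosSemidef := by
    simpa using posSemidef_conjTranspose_mul_self T
  exact PosDef.posSemidef_add hTT (posDef_diagonal_iff.mpr hd)

theorem isUnit_det_transpose_mul_self_add_smul_one {m n : Type*} [Fintype m] [Fintype n]
    [DecidableEq n] (T : Matrix m n ℝ) {σ : ℝ} (hσ : σ ≠ 0) :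
    IsUnit (Tᵀ * T + σ ^ 2 • 1).det := by
  rw [smul_one_eq_diagonal]
  exact (posDef_transpose_mul_self_add_diagonal T fun _ ↦ sq_pos_of_ne_zero hσ).det_pos.ne'.isUnit

theorem oracleK_eq_transpose_mul_self_add_diagonal (TI : Matrix (Fin p) (Fin pI) ℝ)
    (TJ : Matrix (Fin p) (Fin pJ) ℝ) (σI σJ : ℝ) :
    oracleK TI TJ σI σJ = (fromCols TI TJ)ᵀ * fromCols TI TJ +
      diagonal (Sum.elim (fun _ ↦ σI ^ 2) fun _ ↦ σJ ^ 2) := by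
  rw [transpose_fromCols, fromRows_mul_fromCols, ← fromBlocks_diagonal, fromBlocks_add,
    oracleK, smul_one_eq_diagonal, smul_one_eq_diagonal]
  simp

theorem isUnit_det_oracleK (TI : Matrix (Fin p) (Fin pI) ℝ) (TJ : Matrix (Fin p) (Fin pJ) ℝ)
    {σI σJ : ℝ} (hσI : σI ≠ 0) (hσJ : σJ ≠ 0) : IsUnit (oracleK TI TJ σI σJ).det := by
  rw [oracleK_eq_transpose_mul_self_add_diagonal]
  refine (posDef_transpose_mul_self_add_diagonal _ ?_).det_pos.ne'.isUnit
  rintro (i | i)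
  exacts [sq_pos_of_ne_zero hσI, sq_pos_of_ne_zero hσJ]

theorem mulVec_thetaBarI_add_mulVec_thetaBarJ (θ : Fin p → ℝ) (TI : Matrix (Fin p) (Fin pI) ℝ)
    (TJ : Matrix (Fin p) (Fin pJ) ℝ) {σI σJ : ℝ} (hσI : σI ≠ 0) (hσJ : σJ ≠ 0) :
    (TIᵀ * TI + σI ^ 2 • 1) *ᵥ thetaBarI θ TI TJ σI σJ + (TIᵀ * TJ) *ᵥ thetaBarJ θ TI TJ σI σJ =
      TIᵀ *ᵥ θ := by
  have hK := nonsing_inv_mul _ (isUnit_det_oracleK TI TJ hσI hσJ)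
  rw [← fromBlocks_toBlocks (oracleK TI TJ σI σJ)⁻¹] at hK
  have hrow := transpose_mul_add_of_fromBlocks_mul_eq_one hK TIᵀ TJᵀ
  simp only [transpose_add, transpose_mul, transpose_transpose, transpose_smul, transpose_one]
    at hrow
  rw [thetaBarI, thetaBarJ, mulVec_mulVec, mulVec_mulVec, ← add_mulVec]
  exact congrArg (· *ᵥ θ) hrow

theorem oracle_coeff_relation_general
    (θ : Fin p → ℝ) (TI : Matrix (Fin p) (Fin pI) ℝ) (TJ : Matrix (Fin p) (Fin pJ) ℝ)
    (σI σJ : ℝ) (hσI : 0 < σI) (hσJ : 0 < σJ) :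
    (TIᵀ * TI + σI ^ 2 • 1)⁻¹ *ᵥ ((TIᵀ * TJ) *ᵥ thetaBarJ θ TI TJ σI σJ)
        + thetaBarI θ TI TJ σI σJ = thetaStarI θ TI σI ∧
    (TIᵀ * TI + σI ^ 2 • 1)⁻¹ *ᵥ ((TIᵀ * TJ) *ᵥ thetaBarJ θ TI TJ σI σJ)
        - (thetaStarI θ TI σI - thetaBarI θ TI TJ σI σJ) = 0 := by
  have hinv := nonsing_inv_mul _ (isUnit_det_transpose_mul_self_add_smul_one TI hσI.ne')
  have key : (TIᵀ * TI + σI ^ 2 • 1)⁻¹ *ᵥ ((TIᵀ * TJ) *ᵥ thetaBarJ θ TI TJ σI σJ)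
      + thetaBarI θ TI TJ σI σJ = thetaStarI θ TI σI := by
    rw [thetaStarI, ← mulVec_thetaBarI_add_mulVec_thetaBarJ θ TI TJ hσI.ne' hσJ.ne',
      mulVec_add, mulVec_mulVec (thetaBarI θ TI TJ σI σJ), hinv, one_mulVec, add_comm]
  exact ⟨key, by rw [← key]; abel⟩

/-- The oracle coefficients satisfy
`Σ̃_I⁻¹ T_IJ θ̄*_J + θ̄*_I = θ*_I`; equivalently
`Σ̃_I⁻¹ T_IJ θ̄*_J − (θ*_I − θ̄*_I) = 0`. -/
theorem oracle_coeff_relation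
    (hp : 0 < p) (hpI : 0 < pI) (hpJ : 0 < pJ)
    (θ : Fin p → ℝ) (TI : Matrix (Fin p) (Fin pI) ℝ) (TJ : Matrix (Fin p) (Fin pJ) ℝ)
    (σI σJ : ℝ) (hσI : 0 < σI) (hσJ : 0 < σJ) :
    (TIᵀ * TI + σI ^ 2 • 1)⁻¹ *ᵥ ((TIᵀ * TJ) *ᵥ thetaBarJ θ TI TJ σI σJ)
        + thetaBarI θ TI TJ σI σJ = thetaStarI θ TI σI ∧
    (TIᵀ * TI + σI ^ 2 • 1)⁻¹ *ᵥ ((TIᵀ * TJ) *ᵥ thetaBarJ θ TI TJ σI σJ)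
        - (thetaStarI θ TI σI - thetaBarI θ TI TJ σI σJ) = 0 :=
  oracle_coeff_relation_general θ TI TJ σI σJ hσI hσJ

end MetaFusionStmt8
end

section
/- Let θ > 0, T_I > 0, T_J > 0 and σ_I > 0, σ_J > 0, with scalar oracle quantities θ̄*_I, θ̄*_J, θ*_I. Let n be a positive integer and v_I, v_J ∈ ℝⁿ with v_I⊤v_I > 0 and v_J⊤v_J > 0. Then the two conditions (i) (v_I⊤v_J/(v_I⊤v_I))·θ̄*_J − (θ*_I − θ̄*_I) ≥ 0 and (ii) ((v_I⊤v_J)²/((v_I⊤v_I)(v_J⊤v_J)))·θ̄*_I − θ̄*_I ≤ 0 hold simultaneously if and only if v_I⊤v_J/(v_I⊤v_I) ≥ T_IT_J/(T_I² + σ_I²). -/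
open Matrix

namespace MetaFusionStmt10

/-- The scalar oracle matrix `K = [[T_I² + σ_I², T_I T_J], [T_I T_J, T_J² + σ_J²]]`. -/
noncomputable def scalarK (TI TJ σI σJ : ℝ) : Matrix (Fin 2) (Fin 2) ℝ :=
  !![TI ^ 2 + σI ^ 2, TI * TJ; TI * TJ, TJ ^ 2 + σJ ^ 2]

/-- Scalar oracle coefficient `θ̄*_I = (A T_I + C T_J) θ` where `K⁻¹ = [[A,B],[C,D]]`. -/
noncomputable def scalarThetaBarI (θ TI TJ σI σJ : ℝ) : ℝ :=
  ((scalarK TI TJ σI σJ)⁻¹ 0 0 * TI + (scalarK TI TJ σI σJ)⁻¹ 1 0 * TJ) * θ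

/-- Scalar oracle coefficient `θ̄*_J = (B T_I + D T_J) θ` where `K⁻¹ = [[A,B],[C,D]]`. -/
noncomputable def scalarThetaBarJ (θ TI TJ σI σJ : ℝ) : ℝ :=
  ((scalarK TI TJ σI σJ)⁻¹ 0 1 * TI + (scalarK TI TJ σI σJ)⁻¹ 1 1 * TJ) * θ

/-- Scalar oracle coefficient `θ*_I = θ T_I / (T_I² + σ_I²)`. -/
noncomputable def scalarThetaStarI (θ TI σI : ℝ) : ℝ :=
  θ * TI / (TI ^ 2 + σI ^ 2)

lemma Kinv (TI TJ σI σJ : ℝ) :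
    (scalarK TI TJ σI σJ)⁻¹ =
      (TI ^ 2 * σJ ^ 2 + σI ^ 2 * TJ ^ 2 + σI ^ 2 * σJ ^ 2)⁻¹ •
        !![TJ ^ 2 + σJ ^ 2, -(TI * TJ); -(TI * TJ), TI ^ 2 + σI ^ 2] := by
  rw [scalarK, Matrix.inv_def, Matrix.adjugate_fin_two_of, Matrix.det_fin_two_of,
    Ring.inverse_eq_inv]
  ring_nf

lemma barI_eq (θ TI TJ σI σJ : ℝ) :
    scalarThetaBarI θ TI TJ σI σJ =
      TI * σJ ^ 2 * θ / (TI ^ 2 * σJ ^ 2 + σI ^ 2 * TJ ^ 2 + σI ^ 2 * σJ ^ 2) := by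
  simp [scalarThetaBarI, Kinv, Matrix.smul_apply, div_eq_inv_mul]
  ring

lemma barJ_eq (θ TI TJ σI σJ : ℝ) :
    scalarThetaBarJ θ TI TJ σI σJ =
      TJ * σI ^ 2 * θ / (TI ^ 2 * σJ ^ 2 + σI ^ 2 * TJ ^ 2 + σI ^ 2 * σJ ^ 2) := by
  simp [scalarThetaBarJ, Kinv, Matrix.smul_apply, div_eq_inv_mul]
  ring

/-- **simplified event ℰ in the scalar case.** For `θ, T_I, T_J > 0`,
`σ_I, σ_J > 0` and vectors `v_I, v_J ∈ ℝⁿ` with positive squared norms, the two conditions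
`(v_Iᵀv_J / v_Iᵀv_I) θ̄*_J − (θ*_I − θ̄*_I) ≥ 0` and
`((v_Iᵀv_J)² / (v_Iᵀv_I · v_Jᵀv_J)) θ̄*_I − θ̄*_I ≤ 0` hold simultaneously iff
`v_Iᵀv_J / v_Iᵀv_I ≥ T_I T_J / (T_I² + σ_I²)`. -/
theorem scalar_event_equiv
    (θ TI TJ σI σJ : ℝ) (hθ : 0 < θ) (hTI : 0 < TI) (hTJ : 0 < TJ)
    (hσI : 0 < σI) (hσJ : 0 < σJ)
    (n : ℕ) (hn : 0 < n) (vI vJ : Fin n → ℝ)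
    (hvI : 0 < vI ⬝ᵥ vI) (hvJ : 0 < vJ ⬝ᵥ vJ) :
    ((vI ⬝ᵥ vJ / (vI ⬝ᵥ vI)) * scalarThetaBarJ θ TI TJ σI σJ
        - (scalarThetaStarI θ TI σI - scalarThetaBarI θ TI TJ σI σJ) ≥ 0 ∧
      ((vI ⬝ᵥ vJ) ^ 2 / ((vI ⬝ᵥ vI) * (vJ ⬝ᵥ vJ))) * scalarThetaBarI θ TI TJ σI σJ
        - scalarThetaBarI θ TI TJ σI σJ ≤ 0) ↔
    vI ⬝ᵥ vJ / (vI ⬝ᵥ vI) ≥ TI * TJ / (TI ^ 2 + σI ^ 2) := by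
  simp only [barI_eq, barJ_eq, scalarThetaStarI]
  set d : ℝ := TI ^ 2 * σJ ^ 2 + σI ^ 2 * TJ ^ 2 + σI ^ 2 * σJ ^ 2 with hd
  have hd0 : 0 < d := by positivity
  have hP : (0:ℝ) < TI ^ 2 + σI ^ 2 := by positivity
  set r : ℝ := vI ⬝ᵥ vJ / (vI ⬝ᵥ vI) with hr
  have hCS : (vI ⬝ᵥ vJ) ^ 2 ≤ (vI ⬝ᵥ vI) * (vJ ⬝ᵥ vJ) := by
    simpa [dotProduct, pow_two, mul_comm, mul_assoc, mul_left_comm] using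
      Finset.sum_mul_sq_le_sq_mul_sq Finset.univ vI vJ
  have hc1 : (vI ⬝ᵥ vJ) ^ 2 / ((vI ⬝ᵥ vI) * (vJ ⬝ᵥ vJ)) ≤ 1 :=
    (div_le_one (by positivity)).mpr hCS
  have hX : 0 < TI * σJ ^ 2 * θ / d := by positivity
  have heq : r * (TJ * σI ^ 2 * θ / d) = r * (TJ * σI ^ 2 * θ) / d := by ring
  constructor
  · rintro ⟨h1, -⟩
    rw [ge_iff_le, div_le_iff₀ hP]
    rw [ge_iff_le, sub_nonneg, heq,
      div_sub_div _ _ hP.ne' hd0.ne', div_le_div_iff₀ (by positivity) hd0, hd] at h1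
    have key : TI * TJ * (TJ * σI ^ 2 * θ * (TI ^ 2 * σJ ^ 2 + σI ^ 2 * TJ ^ 2 + σI ^ 2 * σJ ^ 2))
        ≤ r * (TI ^ 2 + σI ^ 2) *
          (TJ * σI ^ 2 * θ * (TI ^ 2 * σJ ^ 2 + σI ^ 2 * TJ ^ 2 + σI ^ 2 * σJ ^ 2)) := by
      nlinarith [h1]
    exact le_of_mul_le_mul_right key (by positivity)
  · intro h
    rw [ge_iff_le, div_le_iff₀ hP] at h
    refine ⟨?_, ?_⟩
    · rw [ge_iff_le, sub_nonneg, heq, div_sub_div _ _ hP.ne' hd0.ne',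
        div_le_div_iff₀ (by positivity) hd0, hd]
      nlinarith [mul_le_mul_of_nonneg_right h (show (0:ℝ) ≤ TJ * σI ^ 2 * θ *
        (TI ^ 2 * σJ ^ 2 + σI ^ 2 * TJ ^ 2 + σI ^ 2 * σJ ^ 2) by positivity)]
    · have := mul_le_of_le_one_left hX.le hc1
      nlinarith [this]

end MetaFusionStmt10
end

section
/- Let v_I ∈ ℝ^{n×p_I}, v_J ∈ ℝ^{n×p_J} with v_II and v_JJ positive definite, and let θ̄*_I ∈ ℝ^{p_I}, θ̄*_J ∈ ℝ^{p_J}, θ*_I ∈ ℝ^{p_I}, and w ∈ ℝ^{p_I} with all entries of w strictly positive. Set μ := v_Iθ̄*_I + v_Jθ̄*_J, let m(ρ) be the first block of G(ρ)⁻¹·(v_I⊤μ; v_J⊤μ), and define the bias term B²(ρ) := w⊤((θ*_I − m(ρ))^∘2). Set a := v_II⁻¹v_IJθ̄*_J − (θ*_I − θ̄*_I) and b := v_II⁻¹v_IJv_JJ⁻¹v_JIθ̄*_I − θ̄*_I. Then ρ ↦ B²(ρ) is differentiable at ρ = 0 with derivative (d/dρ)B²(ρ)|_{ρ=0} = 2·w⊤(a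 ∘ b). In particular, if a ⪰ 0 and b ⪯ 0 (the event ℰ), then (d/dρ)B²(ρ)|_{ρ=0} ≤ 0. -/
/-
`G(ρ) = G₀ + ρ G₁` with `G₀ = diag(v_II, v_JJ)` and `G₁ = [[v_II, -v_IJ], [-v_JI, v_JJ]]`, so
the derivative of `G(ρ)⁻¹` at `0` is `-G₀⁻¹ G₁ G₀⁻¹`. The right-hand side `(v_Iᵀ μ; v_Jᵀ μ)` is
`M θ̄` for the full Gram matrix `M = [[v_II, v_IJ], [v_JI, v_JJ]]`. With `E = v_II⁻¹ v_IJ` and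
`F = v_JJ⁻¹ v_JI` we have `G₀⁻¹ M = [[1, E], [F, 1]]` and `G₀⁻¹ G₁ = [[1, -E], [-F, 1]]`, whose
product is `diag(1 - EF, 1 - FE)`. Hence `m(0) = θ̄_I + E θ̄_J`, i.e. `m(0) - θ*_I = a`, and
`m'(0) = EF θ̄_I - θ̄_I = b`; the chain rule applied to `Σ_j w_j (θ*_j - m_j(ρ))²` gives
`2 wᵀ (a ∘ b)`.
-/

open Matrix

namespace MetaFusionStmt11

/-- The block matrix `G(ρ) = [[(1+ρ)v_II, −ρ v_IJ], [−ρ v_JI, (1+ρ)v_JJ]]`. -/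
def mlG {n pI pJ : ℕ} (vI : Matrix (Fin n) (Fin pI) ℝ)
    (vJ : Matrix (Fin n) (Fin pJ) ℝ) (ρ : ℝ) :
    Matrix (Fin pI ⊕ Fin pJ) (Fin pI ⊕ Fin pJ) ℝ :=
  Matrix.fromBlocks ((1 + ρ) • (vIᵀ * vI)) ((-ρ) • (vIᵀ * vJ))
    ((-ρ) • (vJᵀ * vI)) ((1 + ρ) • (vJᵀ * vJ))

/-- The conditional mean `m(ρ)`: the first block of `G(ρ)⁻¹ (v_Iᵀ μ; v_Jᵀ μ)`, where
`μ = v_I θ̄*_I + v_J θ̄*_J`. -/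
noncomputable def condMeanI {n pI pJ : ℕ} (vI : Matrix (Fin n) (Fin pI) ℝ)
    (vJ : Matrix (Fin n) (Fin pJ) ℝ) (θbI : Fin pI → ℝ) (θbJ : Fin pJ → ℝ)
    (ρ : ℝ) : Fin pI → ℝ :=
  fun i => ((mlG vI vJ ρ)⁻¹ *ᵥ
    Sum.elim (vIᵀ *ᵥ (vI *ᵥ θbI + vJ *ᵥ θbJ)) (vJᵀ *ᵥ (vI *ᵥ θbI + vJ *ᵥ θbJ))) (Sum.inl i)

theorem sum_elim_transpose_mulVec_eq_fromBlocks_mulVec {R k m n : Type*} [CommSemiring R]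
    [Fintype k] [Fintype m] [Fintype n] (X : Matrix k m R) (Y : Matrix k n R) (x : m → R)
    (y : n → R) :
    Sum.elim (Xᵀ *ᵥ (X *ᵥ x + Y *ᵥ y)) (Yᵀ *ᵥ (X *ᵥ x + Y *ᵥ y))
      = fromBlocks (Xᵀ * X) (Xᵀ * Y) (Yᵀ * X) (Yᵀ * Y) *ᵥ Sum.elim x y := by
  simp [fromBlocks_mulVec, mulVec_add, mulVec_mulVec]

section BlockInverse

variable {R m n : Type*} [CommRing R] [Fintype m] [Fintype n] [DecidableEq m] [DecidableEq n]
  {A : Matrix m m R} {D : Matrix n n R}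

theorem inv_fromBlocks_zero_zero (hA : IsUnit A) (hD : IsUnit D) :
    (fromBlocks A 0 0 D)⁻¹ = fromBlocks A⁻¹ 0 0 D⁻¹ := by
  simp [inv_fromBlocks_zero₂₁_of_isUnit_iff A 0 D (iff_of_true hA hD)]

theorem inv_fromBlocks_zero_zero_mul (hA : IsUnit A) (hD : IsUnit D) (B : Matrix m n R)
    (C : Matrix n m R) :
    (fromBlocks A 0 0 D)⁻¹ * fromBlocks A B C D = fromBlocks 1 (A⁻¹ * B) (D⁻¹ * C) 1 := by
  rw [inv_fromBlocks_zero_zero hA hD, fromBlocks_multiply]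
  simp [nonsing_inv_mul _ ((isUnit_iff_isUnit_det _).mp hA),
    nonsing_inv_mul _ ((isUnit_iff_isUnit_det _).mp hD)]

theorem fromBlocks_one_neg_mul_fromBlocks_one (E : Matrix m n R) (F : Matrix n m R) :
    fromBlocks 1 (-E) (-F) 1 * fromBlocks 1 E F 1 = fromBlocks (1 - E * F) 0 0 (1 - F * E) := by
  simp [fromBlocks_multiply, sub_eq_add_neg, add_comm]

theorem neg_inv_fromBlocks_mul_mul_inv_mul (hA : IsUnit A) (hD : IsUnit D) (B : Matrix m n R)
    (C : Matrix n m R) :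
    -((fromBlocks A 0 0 D)⁻¹ * fromBlocks A (-B) (-C) D * (fromBlocks A 0 0 D)⁻¹)
        * fromBlocks A B C D
      = fromBlocks (A⁻¹ * B * (D⁻¹ * C) - 1) 0 0 (D⁻¹ * C * (A⁻¹ * B) - 1) := by
  rw [neg_mul, Matrix.mul_assoc, inv_fromBlocks_zero_zero_mul hA hD,
    inv_fromBlocks_zero_zero_mul hA hD, Matrix.mul_neg, Matrix.mul_neg,
    fromBlocks_one_neg_mul_fromBlocks_one, fromBlocks_neg]
  simp

end BlockInverse

section InverseDerivative

variable {𝕜 ι : Type*} [RCLike 𝕜] [Fintype ι] [DecidableEq ι]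

-- Any norm would do: the `L∞` operator norm makes matrices the complete normed algebra
-- that `hasFDerivAt_ringInverse` needs; the statements only involve the product topology.
attribute [local instance] Matrix.linftyOpNormedRing Matrix.linftyOpNormedAlgebra

theorem hasDerivAt_nonsing_inv_add_smul {A : Matrix ι ι 𝕜} (hA : IsUnit A) (B : Matrix ι ι 𝕜) :
    HasDerivAt (fun t : 𝕜 => (A + t • B)⁻¹) (-(A⁻¹ * B * A⁻¹)) 0 := by
  obtain ⟨u, rfl⟩ := hA
  have hline : HasDerivAt (fun t : 𝕜 => (u : Matrix ι ι 𝕜) + t • B) B 0 := by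
    have h := ((hasDerivAt_id (0 : 𝕜)).smul_const B).const_add (u : Matrix ι ι 𝕜)
    rwa [one_smul] at h
  have hfd := hasFDerivAt_ringInverse (𝕜 := 𝕜) u
  rw [← show (u : Matrix ι ι 𝕜) + (0 : 𝕜) • B = u by simp] at hfd
  simp_rw [nonsing_inv_eq_ringInverse, Ring.inverse_unit]
  exact hfd.comp_hasDerivAt (0 : 𝕜) hline

theorem hasDerivAt_nonsing_inv_add_smul_mulVec {A : Matrix ι ι 𝕜} (hA : IsUnit A)
    (B : Matrix ι ι 𝕜) (c : ι → 𝕜) :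
    HasDerivAt (fun t : 𝕜 => (A + t • B)⁻¹ *ᵥ c) (-(A⁻¹ * B * A⁻¹) *ᵥ c) 0 := by
  exact ((mulVecBilin 𝕜 𝕜).flip c).toContinuousLinearMap.hasFDerivAt.comp_hasDerivAt 0
    (hasDerivAt_nonsing_inv_add_smul hA B)

end InverseDerivative

theorem hasDerivAt_dotProduct_sub_sq {𝕜 ι : Type*} [NontriviallyNormedField 𝕜] [Fintype ι]
    {m : 𝕜 → ι → 𝕜} {m' : ι → 𝕜} {t : 𝕜} (hm : HasDerivAt m m' t) (w θ : ι → 𝕜) :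
    HasDerivAt (fun s => w ⬝ᵥ fun j => (θ j - m s j) ^ 2)
      (2 * (w ⬝ᵥ fun j => (m t j - θ j) * m' j)) t := by
  have hcoord : ∀ j ∈ Finset.univ, HasDerivAt (fun s => w j * (θ j - m s j) ^ 2)
      (w j * (2 * (m t j - θ j) * m' j)) t := fun j _ =>
    ((((hasDerivAt_pi.1 hm j).const_sub (θ j)).pow 2).const_mul (w j)).congr_deriv
      (by norm_num; ring)
  exact (HasDerivAt.fun_sum hcoord).congr_deriv (by
    simp only [dotProduct, Finset.mul_sum]
    exact Finset.sum_congr rfl fun j _ => by ring)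

section GramBlocks

variable {n pI pJ : ℕ} (vI : Matrix (Fin n) (Fin pI) ℝ) (vJ : Matrix (Fin n) (Fin pJ) ℝ)

theorem mlG_eq_add_smul (ρ : ℝ) :
    mlG vI vJ ρ = fromBlocks (vIᵀ * vI) 0 0 (vJᵀ * vJ)
      + ρ • fromBlocks (vIᵀ * vI) (-(vIᵀ * vJ)) (-(vJᵀ * vI)) (vJᵀ * vJ) := by
  rw [mlG, fromBlocks_smul, fromBlocks_add]
  congr 1 <;> module

theorem condMeanI_eq (θbI : Fin pI → ℝ) (θbJ : Fin pJ → ℝ) (ρ : ℝ) :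
    condMeanI vI vJ θbI θbJ ρ = fun i =>
      ((fromBlocks (vIᵀ * vI) 0 0 (vJᵀ * vJ)
          + ρ • fromBlocks (vIᵀ * vI) (-(vIᵀ * vJ)) (-(vJᵀ * vI)) (vJᵀ * vJ))⁻¹ *ᵥ
        (fromBlocks (vIᵀ * vI) (vIᵀ * vJ) (vJᵀ * vI) (vJᵀ * vJ) *ᵥ Sum.elim θbI θbJ))
        (Sum.inl i) := by
  unfold condMeanI
  rw [mlG_eq_add_smul, sum_elim_transpose_mulVec_eq_fromBlocks_mulVec]

variable {vI vJ}

theorem condMeanI_zero (hI : IsUnit (vIᵀ * vI)) (hJ : IsUnit (vJᵀ * vJ)) (θbI : Fin pI → ℝ)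
    (θbJ : Fin pJ → ℝ) :
    condMeanI vI vJ θbI θbJ 0 = θbI + (vIᵀ * vI)⁻¹ *ᵥ ((vIᵀ * vJ) *ᵥ θbJ) := by
  ext i
  rw [condMeanI_eq, zero_smul, add_zero, mulVec_mulVec, inv_fromBlocks_zero_zero_mul hI hJ]
  simp [fromBlocks_mulVec]

theorem hasDerivAt_condMeanI_zero (hI : IsUnit (vIᵀ * vI)) (hJ : IsUnit (vJᵀ * vJ))
    (θbI : Fin pI → ℝ) (θbJ : Fin pJ → ℝ) :
    HasDerivAt (condMeanI vI vJ θbI θbJ)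
      ((vIᵀ * vI)⁻¹ *ᵥ ((vIᵀ * vJ) *ᵥ ((vJᵀ * vJ)⁻¹ *ᵥ ((vJᵀ * vI) *ᵥ θbI))) - θbI) 0 := by
  have hP : IsUnit (fromBlocks (vIᵀ * vI) 0 0 (vJᵀ * vJ)) :=
    isUnit_fromBlocks_zero₁₂.2 ⟨hI, hJ⟩
  have h := hasDerivAt_pi.1 (hasDerivAt_nonsing_inv_add_smul_mulVec hP
    (fromBlocks (vIᵀ * vI) (-(vIᵀ * vJ)) (-(vJᵀ * vI)) (vJᵀ * vJ))
    (fromBlocks (vIᵀ * vI) (vIᵀ * vJ) (vJᵀ * vI) (vJᵀ * vJ) *ᵥ Sum.elim θbI θbJ))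
  refine hasDerivAt_pi.2 fun i => ?_
  simp_rw [condMeanI_eq]
  convert h (Sum.inl i) using 1
  conv_rhs => rw [mulVec_mulVec, neg_inv_fromBlocks_mul_mul_inv_mul hI hJ]
  simp [fromBlocks_mulVec, sub_mulVec, mulVec_mulVec, Matrix.mul_assoc]

end GramBlocks

/-- With `v_II`, `v_JJ` positive definite, `w` entrywise positive,
`B²(ρ) = wᵀ ((θ*_I − m(ρ))^∘2)`, `a = v_II⁻¹ v_IJ θ̄*_J − (θ*_I − θ̄*_I)` and
`b = v_II⁻¹ v_IJ v_JJ⁻¹ v_JI θ̄*_I − θ̄*_I`: the map `ρ ↦ B²(ρ)` is differentiable at `0`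
with derivative `2 wᵀ (a ∘ b)`; in particular if `a ⪰ 0` and `b ⪯ 0` (the event ℰ), this
derivative is `≤ 0`. -/
theorem bias_deriv_at_zero
    (n pI pJ : ℕ) (vI : Matrix (Fin n) (Fin pI) ℝ) (vJ : Matrix (Fin n) (Fin pJ) ℝ)
    (hI : (vIᵀ * vI).PosDef) (hJ : (vJᵀ * vJ).PosDef)
    (θbI : Fin pI → ℝ) (θbJ : Fin pJ → ℝ) (θsI : Fin pI → ℝ)
    (w : Fin pI → ℝ) (hw : ∀ j, 0 < w j) :
    HasDerivAt (fun ρ => w ⬝ᵥ fun j => (θsI j - condMeanI vI vJ θbI θbJ ρ j) ^ 2)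
      (2 * (w ⬝ᵥ fun j =>
        ((vIᵀ * vI)⁻¹ *ᵥ ((vIᵀ * vJ) *ᵥ θbJ) - (θsI - θbI)) j *
        ((vIᵀ * vI)⁻¹ *ᵥ ((vIᵀ * vJ) *ᵥ ((vJᵀ * vJ)⁻¹ *ᵥ ((vJᵀ * vI) *ᵥ θbI))) - θbI) j)) 0 ∧
    ((∀ j, 0 ≤ ((vIᵀ * vI)⁻¹ *ᵥ ((vIᵀ * vJ) *ᵥ θbJ) - (θsI - θbI)) j) →
     (∀ j, ((vIᵀ * vI)⁻¹ *ᵥ ((vIᵀ * vJ) *ᵥ ((vJᵀ * vJ)⁻¹ *ᵥ ((vJᵀ * vI) *ᵥ θbI))) - θbI) j ≤ 0) →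
      2 * (w ⬝ᵥ fun j =>
        ((vIᵀ * vI)⁻¹ *ᵥ ((vIᵀ * vJ) *ᵥ θbJ) - (θsI - θbI)) j *
        ((vIᵀ * vI)⁻¹ *ᵥ ((vIᵀ * vJ) *ᵥ ((vJᵀ * vJ)⁻¹ *ᵥ ((vJᵀ * vI) *ᵥ θbI))) - θbI) j) ≤ 0) := by
  refine ⟨?_, fun ha hb => ?_⟩
  · refine (hasDerivAt_dotProduct_sub_sq
      (hasDerivAt_condMeanI_zero hI.isUnit hJ.isUnit θbI θbJ) w θsI).congr_deriv ?_
    rw [condMeanI_zero hI.isUnit hJ.isUnit]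
    congr 2 with j
    simp only [Pi.add_apply, Pi.sub_apply]
    ring
  · exact mul_nonpos_of_nonneg_of_nonpos zero_le_two
      ((dotProduct_le_dotProduct_of_nonneg_left (v := 0)
        (fun j => mul_nonpos_of_nonneg_of_nonpos (ha j) (hb j)) fun j => (hw j).le).trans_eq
        (dotProduct_zero w))

end MetaFusionStmt11
end

section
/- Let v_I ∈ ℝ^{n×p_I}, v_J ∈ ℝ^{n×p_J} with v_II and v_JJ positive definite. Define M(ρ) := [I_{p_I}, 0]·G(ρ)⁻¹·[v_I, v_J]⊤ ∈ ℝ^{p_I×n} (so that the mutual-learning estimator satisfies θ̂_I(ρ) = M(ρ)Y for every Y ∈ ℝⁿ). Then the map ρ ↦ diag(M(ρ)M(ρ)⊤) ∈ ℝ^{p_I} is differentiable at ρ = 0 with derivative 2·diag((v_II⁻¹v_IJv_JJ⁻¹v_JI − I_{p_I})·v_II⁻¹). Consequently, if Y = μ + ε̄ where ε̄ ∈ ℝⁿ is a random vector with mean zero and covariance matrix σ̄²·I_n for some σ̄² > 0 and μ ∈ ℝⁿ is fixed, then the vector of coordinatewise variances of θ̂_I(ρ) = M(ρ)Y equals σ̄²·diag(M(ρ)M(ρ)⊤),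 and its derivative at ρ = 0 equals 2σ̄²·diag((v_II⁻¹v_IJv_JJ⁻¹v_JI − I_{p_I})·v_II⁻¹). -/
/-!
Write `G(ρ) = G₀ + ρ G₁` with `G₀ = diag(v_II, v_JJ)`. Differentiating the inverse gives
`(G⁻¹)'(0) = -G₀⁻¹ G₁ G₀⁻¹`, so `M(0) = v_II⁻¹ v_Iᵀ` and
`M'(0) = v_II⁻¹ v_IJ v_JJ⁻¹ v_Jᵀ - v_II⁻¹ v_Iᵀ`. The derivative of `diag(M Mᵀ)` is
`2 diag(M'(0) M(0)ᵀ)`, where `M(0)ᵀ = v_I v_II⁻¹` because `v_II` is symmetric.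
For the variances, `(M Y)_j = (M μ)_j + ⟨M_j, ε̄⟩` and, for white noise,
`Var ⟨c, ε̄⟩ = Σ c_k c_l Cov(ε̄_k, ε̄_l) = σ̄² ⟨c, c⟩`.
-/

open Matrix MeasureTheory ProbabilityTheory

namespace MetaFusionStmt12

/-- The block matrix `G(ρ) = [[(1+ρ)v_II, −ρ v_IJ], [−ρ v_JI, (1+ρ)v_JJ]]`. -/
def mlG {n pI pJ : ℕ} (vI : Matrix (Fin n) (Fin pI) ℝ)
    (vJ : Matrix (Fin n) (Fin pJ) ℝ) (ρ : ℝ) :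
    Matrix (Fin pI ⊕ Fin pJ) (Fin pI ⊕ Fin pJ) ℝ :=
  Matrix.fromBlocks ((1 + ρ) • (vIᵀ * vI)) ((-ρ) • (vIᵀ * vJ))
    ((-ρ) • (vJᵀ * vI)) ((1 + ρ) • (vJᵀ * vJ))

/-- `M(ρ) = [I_{p_I}, 0] G(ρ)⁻¹ [v_I, v_J]ᵀ ∈ ℝ^{p_I × n}`, so that the mutual-learning
estimator is `θ̂_I(ρ) = M(ρ) Y`. -/
noncomputable def mlM {n pI pJ : ℕ} (vI : Matrix (Fin n) (Fin pI) ℝ)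
    (vJ : Matrix (Fin n) (Fin pJ) ℝ) (ρ : ℝ) : Matrix (Fin pI) (Fin n) ℝ :=
  ((mlG vI vJ ρ)⁻¹ * (Matrix.fromCols vI vJ)ᵀ).submatrix Sum.inl id

section Calculus

-- A submultiplicative norm makes the inverse differentiable via `hasFDerivAt_ringInverse`; it
-- induces the product topology, so the statements below do not depend on it.
attribute [local instance] Matrix.linftyOpNormedAddCommGroup Matrix.linftyOpNormedSpace
  Matrix.linftyOpNormedRing Matrix.linftyOpNormedAlgebra

variable {l m n k : Type*} [Fintype l] [Fintype m] [Fintype n] [Fintype k]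

theorem _root_.Matrix.hasDerivAt_inv_add_smul_s12 [DecidableEq m] {A B : Matrix m m ℝ}
    (hA : IsUnit A.det) :
    HasDerivAt (fun t : ℝ => (A + t • B)⁻¹) (-(A⁻¹ * B * A⁻¹)) 0 := by
  obtain ⟨u, rfl⟩ := (isUnit_iff_isUnit_det A).2 hA
  have hline : HasDerivAt (fun t : ℝ => (u : Matrix m m ℝ) + t • B) B 0 := by
    have h := ((hasDerivAt_id (0 : ℝ)).smul_const B).const_add (u : Matrix m m ℝ)
    rwa [one_smul] at h
  have hu : (u : Matrix m m ℝ) + (0 : ℝ) • B = u := by rw [zero_smul, add_zero]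
  have hinv := (hu ▸ hasFDerivAt_ringInverse (𝕜 := ℝ) u).comp_hasDerivAt (0 : ℝ) hline
  simp_rw [nonsing_inv_eq_ringInverse, Ring.inverse_unit]
  exact hinv.congr_deriv (by simp)

theorem _root_.HasDerivAt.const_matrix_mul_mul_const {F : ℝ → Matrix m n ℝ} {F' : Matrix m n ℝ}
    {t : ℝ} (A : Matrix l m ℝ) (B : Matrix n k ℝ) (h : HasDerivAt F F' t) :
    HasDerivAt (fun s => A * F s * B) (A * F' * B) t :=
  (LinearMap.toContinuousLinearMap
    (mulRightLinearMap l ℝ B ∘ₗ mulLeftLinearMap n ℝ A)).hasFDerivAt.comp_hasDerivAt t h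

theorem _root_.HasDerivAt.matrix_apply {F : ℝ → Matrix m n ℝ} {F' : Matrix m n ℝ} {t : ℝ}
    (h : HasDerivAt F F' t) (i : m) (j : n) :
    HasDerivAt (fun s => F s i j) (F' i j) t :=
  (LinearMap.toContinuousLinearMap (entryLinearMap ℝ ℝ i j)).hasFDerivAt.comp_hasDerivAt t h

theorem _root_.HasDerivAt.diag_mul_transpose {F : ℝ → Matrix m n ℝ} {F' : Matrix m n ℝ} {t : ℝ}
    (h : HasDerivAt F F' t) :
    HasDerivAt (fun s => diag (F s * (F s)ᵀ)) ((2 : ℝ) • diag (F' * (F t)ᵀ)) t := by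
  refine hasDerivAt_pi.2 fun i => ?_
  have := HasDerivAt.fun_sum fun j (_ : j ∈ Finset.univ) =>
    (h.matrix_apply i j).mul (h.matrix_apply i j)
  convert this using 1
  · ext s; simp [mul_apply]
  · simp only [Pi.smul_apply, diag_apply, mul_apply, transpose_apply, smul_eq_mul, Finset.mul_sum]
    exact Finset.sum_congr rfl fun j _ => by ring

end Calculus

theorem _root_.Matrix.inv_fromBlocks_zero_zero {m n α : Type*} [Fintype m] [Fintype n]
    [DecidableEq m] [DecidableEq n] [CommRing α] {A : Matrix m m α} {D : Matrix n n α} (hA : IsUnit A.det)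
    (hD : IsUnit D.det) : (fromBlocks A 0 0 D)⁻¹ = fromBlocks A⁻¹ 0 0 D⁻¹ := by
  rw [inv_fromBlocks_zero₂₁_of_isUnit_iff _ _ _
    (iff_of_true ((isUnit_iff_isUnit_det A).2 hA) ((isUnit_iff_isUnit_det D).2 hD))]
  simp

section WhiteNoise

variable {Ω ι : Type*} [MeasurableSpace Ω] {P : Measure Ω} [IsProbabilityMeasure P] [Fintype ι]
  [DecidableEq ι] {ε : Ω → ι → ℝ} {σ2 : ℝ}

theorem _root_.ProbabilityTheory.variance_const_add_dotProduct (m : ℝ) (c : ι → ℝ)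
    (hε : ∀ i, MemLp (fun ω => ε ω i) 2 P) (hmean : ∀ i, ∫ ω, ε ω i ∂P = 0)
    (hcov : ∀ i j, ∫ ω, ε ω i * ε ω j ∂P = if i = j then σ2 else 0) :
    Var[fun ω => m + c ⬝ᵥ ε ω; P] = σ2 * (c ⬝ᵥ c) := by
  have hterm : ∀ i, MemLp (fun ω => c i * ε ω i) 2 P := fun i => (hε i).const_mul (c i)
  have hsum : MemLp (fun ω => c ⬝ᵥ ε ω) 2 P := memLp_finsetSum Finset.univ fun i _ => hterm i
  have hcov_entry : ∀ i j, cov[fun ω => ε ω i, fun ω => ε ω j; P] = if i = j then σ2 else 0 :=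
    fun i j => by simp [covariance, hmean, hcov]
  rw [variance_const_add hsum.aestronglyMeasurable, ← covariance_self hsum.aemeasurable]
  simp only [dotProduct]
  rw [covariance_fun_sum_fun_sum hterm hterm]
  simp only [covariance_const_mul_right, covariance_const_mul_left, hcov_entry, mul_ite, mul_zero,
    Finset.sum_ite_eq, Finset.mem_univ, if_true, Finset.mul_sum]
  exact Finset.sum_congr rfl fun i _ => by ring

theorem _root_.ProbabilityTheory.variance_mulVec_add_apply {κ : Type*} [Fintype κ]
    (M : Matrix κ ι ℝ) (μ : ι → ℝ) (hε : ∀ i, MemLp (fun ω => ε ω i) 2 P)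
    (hmean : ∀ i, ∫ ω, ε ω i ∂P = 0)
    (hcov : ∀ i j, ∫ ω, ε ω i * ε ω j ∂P = if i = j then σ2 else 0) (j : κ) :
    Var[fun ω => (M *ᵥ (μ + ε ω)) j; P] = σ2 * diag (M * Mᵀ) j := by
  simp_rw [mulVec_add]
  exact variance_const_add_dotProduct _ (M j) hε hmean hcov

end WhiteNoise

section MutualLearning

variable {n pI pJ : ℕ} (vI : Matrix (Fin n) (Fin pI) ℝ) (vJ : Matrix (Fin n) (Fin pJ) ℝ)

theorem mlG_eq_add_smul (ρ : ℝ) :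
    mlG vI vJ ρ = fromBlocks (vIᵀ * vI) 0 0 (vJᵀ * vJ)
      + ρ • fromBlocks (vIᵀ * vI) (-(vIᵀ * vJ)) (-(vJᵀ * vI)) (vJᵀ * vJ) := by
  rw [mlG, fromBlocks_smul, fromBlocks_add]
  congr 1 <;> module

theorem mlM_eq_mul (ρ : ℝ) :
    mlM vI vJ ρ =
      (fromCols 1 0 : Matrix (Fin pI) (Fin pI ⊕ Fin pJ) ℝ) * (mlG vI vJ ρ)⁻¹ *
        fromRows vIᵀ vJᵀ := by
  rw [Matrix.mul_assoc, ← fromRows_toRows ((mlG vI vJ ρ)⁻¹ * fromRows vIᵀ vJᵀ),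
    fromCols_mul_fromRows, Matrix.one_mul, Matrix.zero_mul, add_zero, mlM,
    transpose_fromCols]
  rfl

variable {vI vJ}

theorem mlM_zero (hI : IsUnit (vIᵀ * vI).det) (hJ : IsUnit (vJᵀ * vJ).det) :
    mlM vI vJ 0 = (vIᵀ * vI)⁻¹ * vIᵀ := by
  rw [mlM_eq_mul, mlG_eq_add_smul, zero_smul, add_zero, inv_fromBlocks_zero_zero hI hJ]
  simp only [fromCols_mul_fromBlocks, fromCols_mul_fromRows, Matrix.one_mul, Matrix.zero_mul,
    Matrix.mul_zero, add_zero]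

theorem hasDerivAt_mlM (hI : IsUnit (vIᵀ * vI).det) (hJ : IsUnit (vJᵀ * vJ).det) :
    HasDerivAt (mlM vI vJ)
      ((vIᵀ * vI)⁻¹ * (vIᵀ * vJ) * (vJᵀ * vJ)⁻¹ * vJᵀ - (vIᵀ * vI)⁻¹ * vIᵀ) 0 := by
  have hdet : IsUnit (fromBlocks (vIᵀ * vI) 0 0 (vJᵀ * vJ)).det := by
    rw [det_fromBlocks_zero₂₁]
    exact hI.mul hJ
  have h := (Matrix.hasDerivAt_inv_add_smul_s12
    (B := fromBlocks (vIᵀ * vI) (-(vIᵀ * vJ)) (-(vJᵀ * vI)) (vJᵀ * vJ)) hdet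
    ).const_matrix_mul_mul_const
      (fromCols 1 0 : Matrix (Fin pI) (Fin pI ⊕ Fin pJ) ℝ) (fromRows vIᵀ vJᵀ)
  convert h using 1
  · funext ρ
    rw [mlM_eq_mul, mlG_eq_add_smul]
  · rw [inv_fromBlocks_zero_zero hI hJ]
    simp only [fromBlocks_multiply, nonsing_inv_mul _ hI, nonsing_inv_mul _ hJ,
      fromCols_mul_fromBlocks, fromCols_mul_fromRows, fromCols_neg, Matrix.mul_neg, Matrix.neg_mul,
      Matrix.one_mul, Matrix.zero_mul, Matrix.mul_zero, neg_zero, neg_neg, add_zero, zero_add]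
    abel

theorem hasDerivAt_diag_mlM_mul_transpose (hI : IsUnit (vIᵀ * vI).det)
    (hJ : IsUnit (vJᵀ * vJ).det) :
    HasDerivAt (fun ρ => diag (mlM vI vJ ρ * (mlM vI vJ ρ)ᵀ))
      ((2 : ℝ) • diag
        (((vIᵀ * vI)⁻¹ * (vIᵀ * vJ) * (vJᵀ * vJ)⁻¹ * (vJᵀ * vI) - 1) * (vIᵀ * vI)⁻¹)) 0 := by
  have h := (hasDerivAt_mlM hI hJ).diag_mul_transpose
  rw [mlM_zero hI hJ] at h
  convert h using 3
  have hsymm : ((vIᵀ * vI)⁻¹)ᵀ = (vIᵀ * vI)⁻¹ := by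
    rw [transpose_nonsing_inv, transpose_mul, transpose_transpose]
  rw [transpose_mul, hsymm, transpose_transpose, Matrix.sub_mul, Matrix.sub_mul, Matrix.one_mul]
  simp only [Matrix.mul_assoc]
  rw [← Matrix.mul_assoc vIᵀ vI, nonsing_inv_mul_cancel_left _ _ hI]

end MutualLearning

/-- With `v_II`, `v_JJ` positive definite, the map
`ρ ↦ diag(M(ρ) M(ρ)ᵀ)` is differentiable at `0` with derivative
`2 diag((v_II⁻¹ v_IJ v_JJ⁻¹ v_JI − I) v_II⁻¹)`. Consequently, if `Y = μ + ε̄` where `ε̄`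
has mean zero and covariance `σ̄² I_n`, then the coordinatewise variances of
`θ̂_I(ρ) = M(ρ) Y` equal `σ̄² diag(M(ρ) M(ρ)ᵀ)` and their derivative at `0` equals
`2σ̄² diag((v_II⁻¹ v_IJ v_JJ⁻¹ v_JI − I) v_II⁻¹)`. -/
theorem aleatoric_variance_deriv_at_zero
    (n pI pJ : ℕ) (vI : Matrix (Fin n) (Fin pI) ℝ) (vJ : Matrix (Fin n) (Fin pJ) ℝ)
    (hI : (vIᵀ * vI).PosDef) (hJ : (vJᵀ * vJ).PosDef) :
    HasDerivAt (fun ρ => Matrix.diag (mlM vI vJ ρ * (mlM vI vJ ρ)ᵀ))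
      ((2 : ℝ) • Matrix.diag
        (((vIᵀ * vI)⁻¹ * (vIᵀ * vJ) * (vJᵀ * vJ)⁻¹ * (vJᵀ * vI) - 1) * (vIᵀ * vI)⁻¹)) 0 ∧
    ∀ {Ω : Type} [inst : MeasurableSpace Ω] (P : Measure Ω) [IsProbabilityMeasure P]
      (μ : Fin n → ℝ) (ε : Ω → Fin n → ℝ) (sbar2 : ℝ), 0 < sbar2 →
      (∀ i, Measurable fun ω => ε ω i) →
      (∀ i, Integrable (fun ω => ε ω i) P) →
      (∀ i j, Integrable (fun ω => ε ω i * ε ω j) P) →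
      (∀ i, ∫ ω, ε ω i ∂P = 0) →
      (∀ i j, ∫ ω, ε ω i * ε ω j ∂P = if i = j then sbar2 else 0) →
      (∀ ρ (j : Fin pI),
        variance (fun ω => (mlM vI vJ ρ *ᵥ (μ + ε ω)) j) P
          = sbar2 * Matrix.diag (mlM vI vJ ρ * (mlM vI vJ ρ)ᵀ) j) ∧
      HasDerivAt (fun ρ => fun j : Fin pI =>
          variance (fun ω => (mlM vI vJ ρ *ᵥ (μ + ε ω)) j) P)
        ((2 * sbar2) • Matrix.diag
          (((vIᵀ * vI)⁻¹ * (vIᵀ * vJ) * (vJᵀ * vJ)⁻¹ * (vJᵀ * vI) - 1) * (vIᵀ * vI)⁻¹)) 0 := by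
  have hderiv := hasDerivAt_diag_mlM_mul_transpose hI.det_pos.ne'.isUnit hJ.det_pos.ne'.isUnit
  refine ⟨hderiv, fun P _ μ ε sbar2 _ hmeas _ hsq hmean hcov => ?_⟩
  have hε : ∀ i, MemLp (fun ω => ε ω i) 2 P := fun i =>
    (memLp_two_iff_integrable_sq (hmeas i).aestronglyMeasurable).2 (by simpa only [sq] using hsq i i)
  have hvar ρ j := variance_mulVec_add_apply (mlM vI vJ ρ) μ hε hmean hcov j
  refine ⟨hvar, ?_⟩
  simp_rw [hvar]
  exact (hderiv.const_smul sbar2).congr_deriv (by rw [smul_smul, mul_comm])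

end MetaFusionStmt12
end
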